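/- A permutation p of length n ≥ 1 ending in the entry 1 is strongly 312-avoiding if and only if p has the form p = (k+1)(k+2)⋯n k(k-1)⋯1 for some k with k ≥ n/2; that is, p is unimodal, beginning with its n−k largest entries in increasing order followed by the k smallest entries in decreasing order. -/
import Mathlib

set_option maxHeartbeats 1000000


def Avoids312 {n : ℕ} (p : Equiv.Perm (Fin n)) : Prop :=
  ¬ ∃ a b c : Fin n, a < b ∧ b < c ∧ p b < p c ∧ p c < p a

def StronglyAvoids312 {n : ℕ} (p : Equiv.Perm (Fin n)) : Prop :=
  Avoids312 p ∧ Avoids312 (p * p)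

private lemma aux_forward {n : ℕ} (hn : 2 ≤ n) (p : Equiv.Perm (Fin n))
    (hA : Avoids312 p) (hQ : Avoids312 (p * p))
    (hlast : (p ⟨n - 1, by omega⟩ : ℕ) = 0) :
    ∃ k : ℕ, n ≤ 2 * k ∧ k ≤ n ∧
      ∀ i : Fin n, (p i : ℕ) = if (i : ℕ) < n - k then k + i else n - 1 - i := by
  classical
  have hn1 : n - 1 < n := by omega
  have h0n : 0 < n := by omega
  -- value functions on ℕ
  obtain ⟨P, hPap⟩ : ∃ P : ℕ → ℕ, ∀ (x : ℕ) (h : x < n), P x = ((p ⟨x, h⟩ : Fin n) : ℕ) :=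
    ⟨fun x => if h : x < n then ((p ⟨x, h⟩ : Fin n) : ℕ) else 0, fun x h => dif_pos h⟩
  obtain ⟨Q, hQap⟩ : ∃ Q : ℕ → ℕ, ∀ (x : ℕ) (h : x < n), Q x = (((p * p) ⟨x, h⟩ : Fin n) : ℕ) :=
    ⟨fun x => if h : x < n then (((p * p) ⟨x, h⟩ : Fin n) : ℕ) else 0, fun x h => dif_pos h⟩
  have hPi : ∀ i : Fin n, P (i : ℕ) = (p i : ℕ) := by
    intro i; rw [hPap (i : ℕ) i.isLt]
  have hQi : ∀ i : Fin n, Q (i : ℕ) = ((p * p) i : ℕ) := by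
    intro i; rw [hQap (i : ℕ) i.isLt]
  have Pbound : ∀ x, x < n → P x ≤ n - 1 := by
    intro x h; rw [hPap x h]; have := (p ⟨x, h⟩).isLt; omega
  have hPinj : ∀ x y, x < n → y < n → P x = P y → x = y := by
    intro x y hx hy h
    rw [hPap x hx, hPap y hy] at h
    have := p.injective (Fin.ext h)
    exact congrArg Fin.val this
  have hQinj : ∀ x y, x < n → y < n → Q x = Q y → x = y := by
    intro x y hx hy h
    rw [hQap x hx, hQap y hy] at h
    have := (p * p).injective (Fin.ext h)
    exact congrArg Fin.val this
  have Qval : ∀ x, x < n → Q x = P (P x) := by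
    intro x h
    have hb : P x < n := by have := Pbound x h; omega
    rw [hQap x h, hPap (P x) hb]
    have hE : p ⟨x, h⟩ = ⟨P x, hb⟩ := Fin.ext ((hPap x h).symm)
    show ((p (p ⟨x, h⟩) : Fin n) : ℕ) = ((p ⟨P x, hb⟩ : Fin n) : ℕ)
    rw [hE]
  have hlastP : P (n - 1) = 0 := by
    rw [hPap (n - 1) hn1]; exact hlast
  have hA'' : ∀ a b c : ℕ, a < b → b < c → c < n →
      P b < P c → P c < P a → False := by
    intro a b c h1 h2 h3 h4 h5
    have ha : a < n := by omega
    have hb : b < n := by omega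
    rw [hPap b hb, hPap c h3] at h4
    rw [hPap c h3, hPap a ha] at h5
    exact hA ⟨⟨a, ha⟩, ⟨b, hb⟩, ⟨c, h3⟩, Fin.mk_lt_mk.mpr h1,
      Fin.mk_lt_mk.mpr h2, Fin.lt_def.mpr h4, Fin.lt_def.mpr h5⟩
  have hQ'' : ∀ a b c : ℕ, a < b → b < c → c < n →
      Q b < Q c → Q c < Q a → False := by
    intro a b c h1 h2 h3 h4 h5
    have ha : a < n := by omega
    have hb : b < n := by omega
    rw [hQap b hb, hQap c h3] at h4
    rw [hQap c h3, hQap a ha] at h5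
    exact hQ ⟨⟨a, ha⟩, ⟨b, hb⟩, ⟨c, h3⟩, Fin.mk_lt_mk.mpr h1,
      Fin.mk_lt_mk.mpr h2, Fin.lt_def.mpr h4, Fin.lt_def.mpr h5⟩
  have hex : ∀ v, v < n → ∃ x, x < n ∧ P x = v := by
    intro v hv
    refine ⟨((p.symm ⟨v, hv⟩ : Fin n) : ℕ), (p.symm ⟨v, hv⟩).isLt, ?_⟩
    rw [hPap _ (p.symm ⟨v, hv⟩).isLt]
    show ((p (p.symm ⟨v, hv⟩) : Fin n) : ℕ) = v
    rw [Equiv.apply_symm_apply]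
  -- position of the maximal value
  obtain ⟨m, hmn, hPm⟩ : ∃ m, m < n ∧ P m = n - 1 := by
    refine ⟨((p.symm ⟨n - 1, hn1⟩ : Fin n) : ℕ), (p.symm ⟨n - 1, hn1⟩).isLt, ?_⟩
    rw [hPap _ (p.symm ⟨n - 1, hn1⟩).isLt]
    show ((p (p.symm ⟨n - 1, hn1⟩) : Fin n) : ℕ) = n - 1
    rw [Equiv.apply_symm_apply]
  have hm_lt : m < n - 1 := by
    rcases Nat.lt_or_ge m (n - 1) with h | h
    · exact h
    · exfalso
      have hmeq : m = n - 1 := by omega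
      rw [hmeq, hlastP] at hPm
      omega
  -- p is strictly decreasing on [m, n-1]
  have S5 : ∀ x y, m ≤ x → x < y → y < n → P y < P x := by
    intro x y h1 h2 h3
    by_contra hcon
    push_neg at hcon
    have hne : P x ≠ P y := fun e => by
      have := hPinj x y (by omega) h3 e; omega
    rcases eq_or_lt_of_le h1 with h | h
    · have hby := Pbound y h3
      rw [← h, hPm] at hcon hne
      omega
    · have hy : P y < n - 1 := by
        rcases Nat.lt_or_ge (P y) (n - 1) with h' | h'
        · exact h'
        · exfalso
          have hb := Pbound y h3
          have heq : P y = n - 1 := by omega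
          have := hPinj y m h3 hmn (by rw [heq, hPm])
          omega
      exact hA'' m x y h h2 h3 (lt_of_le_of_ne hcon hne) (by rw [hPm]; exact hy)
  have hqm : Q m = 0 := by
    rw [Qval m hmn, hPm, hlastP]
  have S7 : ∀ a i, a < m → m < i → i < n → Q a < Q i := by
    intro a i h1 h2 h3
    by_contra hcon
    push_neg at hcon
    have hne : Q i ≠ Q a := fun e => by
      have := hQinj i a h3 (by omega) e; omega
    have h0 : 0 < Q i := by
      rcases Nat.eq_zero_or_pos (Q i) with h | h
      · exfalso
        have := hQinj i m h3 hmn (by rw [h, hqm])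
        omega
      · exact h
    exact hQ'' a m i h1 h2 h3 (by rw [hqm]; exact h0) (lt_of_le_of_ne hcon hne)
  have S8a : ∀ i, m < i → i < n → m < Q i := by
    intro i h1 h2
    by_contra hcon
    push_neg at hcon
    set T : Finset (Fin n) := Finset.univ.filter (fun z : Fin n => (z : ℕ) ≤ m) with hT
    have memT : ∀ z : Fin n, z ∈ T ↔ (z : ℕ) ≤ m := by
      intro z; simp [hT]
    have hiT : (⟨i, h2⟩ : Fin n) ∉ T := by
      rw [memT]; simp; omega
    have hmap : ∀ x ∈ insert (⟨i, h2⟩ : Fin n) T, (p * p) x ∈ T := by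
      intro x hx
      rw [memT, ← hQi x]
      rcases Finset.mem_insert.mp hx with rfl | hxT
      · exact hcon
      · rw [memT] at hxT
        rcases eq_or_lt_of_le hxT with h | h
        · rw [h, hqm]; omega
        · have := S7 (x : ℕ) i h h1 h2; omega
    have hcard := Finset.card_le_card_of_injOn (fun x => (p * p) x) hmap
      (fun x _ y _ h => (p * p).injective h)
    rw [Finset.card_insert_of_notMem hiT] at hcard
    omega
  have S8b : ∀ a, a ≤ m → Q a ≤ m := by
    intro a h1
    by_contra hcon
    push_neg at hcon
    have han : a < n := by omega
    set U : Finset (Fin n) := Finset.univ.filter (fun z : Fin n => m < (z : ℕ)) with hU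
    have memU : ∀ z : Fin n, z ∈ U ↔ m < (z : ℕ) := by
      intro z; simp [hU]
    have haU : (⟨a, han⟩ : Fin n) ∉ U := by
      rw [memU]; simp; omega
    have hmap : ∀ x ∈ insert (⟨a, han⟩ : Fin n) U, (p * p) x ∈ U := by
      intro x hx
      rw [memU, ← hQi x]
      rcases Finset.mem_insert.mp hx with rfl | hxU
      · exact hcon
      · rw [memU] at hxU
        exact S8a (x : ℕ) hxU x.isLt
    have hcard := Finset.card_le_card_of_injOn (fun x => (p * p) x) hmap
      (fun x _ y _ h => (p * p).injective h)
    rw [Finset.card_insert_of_notMem haU] at hcard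
    omega
  -- every position ≤ m holds a value > m
  have S9 : ∀ a, a ≤ m → m < P a := by
    intro a ha
    by_contra hcon
    push_neg at hcon
    have han : a < n := by omega
    set D : Finset (Fin n) :=
      Finset.univ.filter (fun x : Fin n => (x : ℕ) ≤ m ∧ P (x : ℕ) ≤ m) with hD
    have memD : ∀ x : Fin n, x ∈ D ↔ (x : ℕ) ≤ m ∧ P (x : ℕ) ≤ m := by
      intro x; simp [hD]
    have hmapD : ∀ x ∈ D, p x ∈ D := by
      intro x hx
      rw [memD] at hx ⊢
      obtain ⟨hx1, hx2⟩ := hx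
      constructor
      · rw [← hPi x]; exact hx2
      · have h1 := S8b (x : ℕ) hx1
        rw [Qval (x : ℕ) x.isLt, hPi x] at h1
        exact h1
    have himg : D.image p = D := by
      apply Finset.eq_of_subset_of_card_le
      · intro y hy
        obtain ⟨x, hx, rfl⟩ := Finset.mem_image.mp hy
        exact hmapD x hx
      · rw [Finset.card_image_of_injective D p.injective]
    have h0D : (⟨0, h0n⟩ : Fin n) ∉ D := by
      intro h0
      rw [← himg] at h0
      obtain ⟨x, hxD, hpx⟩ := Finset.mem_image.mp h0
      have hxval : x = ⟨n - 1, hn1⟩ := by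
        apply p.injective
        apply Fin.ext
        rw [hpx]
        exact hlast.symm
      rw [hxval, memD] at hxD
      have := hxD.1
      simp at this
      omega
    obtain ⟨r, hrn, hrv⟩ := hex m hmn
    have hrm : m < r := by
      by_contra hc
      push_neg at hc
      have hrD : (⟨r, hrn⟩ : Fin n) ∈ D := by
        rw [memD]
        exact ⟨hc, le_of_eq hrv⟩
      have hmD : (⟨m, hmn⟩ : Fin n) ∈ D := by
        rw [← himg]
        apply Finset.mem_image.mpr
        refine ⟨⟨r, hrn⟩, hrD, ?_⟩
        apply Fin.ext
        rw [← hPap r hrn]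
        exact hrv
      rw [memD] at hmD
      have := hmD.2
      simp only [hPm] at this
      omega
    have h0' : ¬ (P 0 ≤ m) := by
      intro hh
      exact h0D (by rw [memD]; exact ⟨Nat.zero_le m, hh⟩)
    have hP0 : m < P 0 := by omega
    have ha0 : 0 < a := by
      rcases Nat.eq_zero_or_pos a with rfl | h
      · omega
      · exact h
    have hPam : P a < m := by
      rcases eq_or_lt_of_le hcon with h | h
      · exfalso
        have := hPinj a r (by omega) hrn (by rw [h, hrv])
        omega
      · exact h
    exact hA'' 0 a r ha0 (by omega) hrn (by rw [hrv]; exact hPam)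
      (by rw [hrv]; exact hP0)
  -- the tail: p x = n-1-x for all x > m
  have tail0 : ∀ t, t + m + 2 ≤ n → P (n - 1 - t) = t := by
    intro t
    induction t using Nat.strong_induction_on with
    | _ t IH =>
      intro ht
      rcases Nat.eq_zero_or_pos t with rfl | htpos
      · exact hlastP
      · have hxm : m < n - 1 - t := by omega
        have hxn : n - 1 - t < n := by omega
        have hprev : P (n - 1 - (t - 1)) = t - 1 := IH (t - 1) (by omega) (by omega)
        have hlow : t ≤ P (n - 1 - t) := by
          have := S5 (n - 1 - t) (n - 1 - (t - 1)) (by omega) (by omega) (by omega)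
          omega
        by_contra hne
        have hgt : t < P (n - 1 - t) := by omega
        obtain ⟨z, hzn, hzv⟩ := hex t (by omega)
        have hzle : z ≤ m := by
          by_contra hzm
          push_neg at hzm
          rcases lt_trichotomy z (n - 1 - t) with h | h | h
          · have := S5 z (n - 1 - t) (by omega) h hxn
            omega
          · rw [h] at hzv; omega
          · have h2 : n - 1 - z < t := by omega
            have h3 := IH (n - 1 - z) h2 (by omega)
            rw [show n - 1 - (n - 1 - z) = z from by omega] at h3
            omega
        have hmt : m < t := by
          have := S9 z hzle; omega
        have hqz : Q z ≤ m := S8b z hzle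
        rw [Qval z hzn, hzv] at hqz
        rcases le_or_gt t (n - 1 - t) with h | h
        · have hPt : P (n - 1 - t) ≤ P t := by
            rcases eq_or_lt_of_le h with h' | h'
            · rw [← h']
            · exact le_of_lt (S5 t (n - 1 - t) (by omega) h' hxn)
          omega
        · have h3 := IH (n - 1 - t) h (by omega)
          rw [show n - 1 - (n - 1 - t) = t from by omega] at h3
          omega
  have tail : ∀ x, m < x → x < n → P x = n - 1 - x := by
    intro x h1 h2
    have := tail0 (n - 1 - x) (by omega)
    rw [show n - 1 - (n - 1 - x) = x from by omega] at this
    omega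
  have h2m : 2 * m + 2 ≤ n := by
    obtain ⟨a0, ha0n, ha0v⟩ := hex (n - 1 - m) (by omega)
    rcases le_or_gt a0 m with h | h
    · have := S9 a0 h
      omega
    · have := tail a0 h ha0n
      omega
  have headlb : ∀ a, a ≤ m → n - 1 - m ≤ P a := by
    intro a ha
    have h1 := S9 a ha
    by_contra hcon
    push_neg at hcon
    have hb := Pbound a (by omega)
    have hx : m < n - 1 - P a := by omega
    have h2 := tail (n - 1 - P a) hx (by omega)
    rw [show n - 1 - (n - 1 - P a) = P a from by omega] at h2
    have := hPinj (n - 1 - P a) a (by omega) (by omega) h2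
    omega
  have hinc : ∀ a b, a < b → b ≤ m → P a < P b := by
    intro a b hab hbm
    by_contra hcon
    push_neg at hcon
    have hbn : b < n := by omega
    have han : a < n := by omega
    have hne : P b ≠ P a := fun e => by
      have := hPinj b a hbn han e; omega
    have hblt : b < m := by
      rcases eq_or_lt_of_le hbm with h | h
      · exfalso
        have hPb : P b = n - 1 := by rw [h, hPm]
        have := Pbound a han
        omega
      · exact h
    have e1 : Q (n - 1 - m) = n - 1 := by
      rw [Qval (n - 1 - m) (by omega), tail (n - 1 - m) (by omega) (by omega),
        show n - 1 - (n - 1 - m) = m from by omega, hPm]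
    have e2 : Q (n - 1 - b) = P b := by
      rw [Qval (n - 1 - b) (by omega), tail (n - 1 - b) (by omega) (by omega),
        show n - 1 - (n - 1 - b) = b from by omega]
    have e3 : Q (n - 1 - a) = P a := by
      rw [Qval (n - 1 - a) (by omega), tail (n - 1 - a) (by omega) (by omega),
        show n - 1 - (n - 1 - a) = a from by omega]
    have haM : P a < n - 1 := by
      have hb := Pbound a han
      rcases Nat.lt_or_ge (P a) (n - 1) with h' | h'
      · exact h'
      · exfalso
        have heq : P a = n - 1 := by omega
        have := hPinj a m han hmn (by rw [heq, hPm])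
        omega
    exact hQ'' (n - 1 - m) (n - 1 - b) (n - 1 - a) (by omega) (by omega) (by omega)
      (by rw [e2, e3]; exact lt_of_le_of_ne hcon hne)
      (by rw [e3, e1]; exact haM)
  have Linc : ∀ d a, a + d ≤ m → P a + d ≤ P (a + d) := by
    intro d
    induction d with
    | zero => intro a _; simp
    | succ d IH =>
      intro a h
      have h1 := IH a (by omega)
      have h2 := hinc (a + d) (a + d + 1) (by omega) (by omega)
      have : a + (d + 1) = a + d + 1 := by omega
      rw [this]
      omega
  have head : ∀ a, a ≤ m → P a = n - 1 - m + a := by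
    intro a ha
    have h1 := Linc a 0 (by omega)
    rw [Nat.zero_add] at h1
    have h2 := Linc (m - a) a (by omega)
    rw [show a + (m - a) = m from by omega, hPm] at h2
    have h3 := headlb 0 (by omega)
    have h4 := headlb a ha
    omega
  refine ⟨n - 1 - m, by omega, by omega, ?_⟩
  intro i
  have hin := i.isLt
  rcases le_or_gt (i : ℕ) m with h | h
  · rw [if_pos (by omega)]
    have := head (i : ℕ) h
    rw [← hPi i]
    omega
  · rw [if_neg (by omega)]
    have := tail (i : ℕ) h hin
    rw [← hPi i]
    omega

/-- A permutation ending in its entry 1 is strongly 312-avoiding iff it is the unimodal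
permutation (k+1)(k+2)⋯n k(k-1)⋯1 for some k ≥ n/2 (written 0-indexed). -/
theorem strongly_avoids_312_ending_in_one_iff {n : ℕ} (hn : 1 ≤ n) (p : Equiv.Perm (Fin n))
    (hlast : (p ⟨n - 1, by omega⟩ : ℕ) = 0) :
    StronglyAvoids312 p ↔
      ∃ k : ℕ, n ≤ 2 * k ∧ k ≤ n ∧
        ∀ i : Fin n, (p i : ℕ) = if (i : ℕ) < n - k then k + i else n - 1 - i := by
  constructor
  · rintro ⟨h1, h2⟩
    rcases Nat.lt_or_ge n 2 with hn2 | hn2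
    · have hn1 : n = 1 := by omega
      subst hn1
      refine ⟨1, by omega, by omega, ?_⟩
      intro i
      rw [if_neg (by omega)]
      have h3 := (p i).isLt
      have h4 := i.isLt
      omega
    · exact aux_forward hn2 p h1 h2 hlast
  · rintro ⟨k, hk1, hk2, hk⟩
    constructor
    · rintro ⟨a, b, c, hab, hbc, h1, h2⟩
      rw [Fin.lt_def] at hab hbc h1 h2
      have ea := hk a
      have eb := hk b
      have ec := hk c
      have ha := a.isLt
      have hb := b.isLt
      have hc := c.isLt
      split_ifs at ea eb ec <;> omega
    · have hq : ∀ i : Fin n, ((p * p) i : ℕ) =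
          if (i : ℕ) < n - k then n - 1 - k - (i : ℕ)
          else if (i : ℕ) < k then (i : ℕ) else k + (n - 1 - (i : ℕ)) := by
        intro i
        have hmul : ((p * p) i : ℕ) = (p (p i) : ℕ) := rfl
        have h1 := hk i
        have h2 := hk (p i)
        have hi := i.isLt
        have hpi := (p i).isLt
        rw [hmul]
        split_ifs at h1 h2 ⊢ <;> omega
      rintro ⟨a, b, c, hab, hbc, h1, h2⟩
      rw [Fin.lt_def] at hab hbc h1 h2
      have ea := hq a
      have eb := hq b
      have ec := hq c
      have ha := a.isLt
      have hb := b.isLt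
      have hc := c.isLt
      split_ifs at ea eb ec <;> omega
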